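/- arXiv:2509.10351 — 4 statements merged into one kernel-verified Lean document; each statement's English description precedes it below -/
import Mathlib

section
/- Let H : L¹ → [-∞, ∞] be cash-additive, i.e. H(Y + c) = H(Y) + H(c) for all Y ∈ L¹ and c ∈ ℝ. If H is negatively star-shaped (H(λY) ≤ λH(Y) for all Y ∈ L¹ and λ > 1), then H is cash-concave, i.e. H(λY + (1-λ)c) ≥ λH(Y) + (1-λ)H(c) for all λ ∈ (0,1), Y ∈ L¹ and c ∈ ℝ. If H is positively star-shaped (H(λY) ≥ λH(Y) for all Y ∈ L¹ and λ > 1), then H is cash-convex, i.e. H(λY + (1-λ)c) ≤ λH(Y) + (1-λ)H(c) for all λ ∈ (0,1), Y ∈ L¹ and c ∈ ℝ. -/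
open MeasureTheory Filter
open scoped ENNReal

namespace URPaper

variable {Ω : Type*} [MeasurableSpace Ω]

/-- The payoff `π · X` of the portfolio `π` in the market `X`. -/
def port {d : ℕ} (X : Fin d → Ω → ℝ) (π : Fin d → ℝ) : Ω → ℝ :=
  fun ω => ∑ i, π i * X i ω

/-- The scaled position `l • Y`. -/
def scale (l : ℝ) (Y : Ω → ℝ) : Ω → ℝ := fun ω => l * Y ω

/-- A functional is increasing (with respect to the a.s. order on `L¹`). -/
def MonoInc (μ : Measure Ω) (U : (Ω → ℝ) → EReal) : Prop :=
  ∀ Y Z : Ω → ℝ, Integrable Y μ → Integrable Z μ →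
    (∀ᵐ ω ∂μ, Y ω ≤ Z ω) → U Y ≤ U Z

/-- A functional is decreasing (with respect to the a.s. order on `L¹`). -/
def MonoDec (μ : Measure Ω) (R : (Ω → ℝ) → EReal) : Prop :=
  ∀ Y Z : Ω → ℝ, Integrable Y μ → Integrable Z μ →
    (∀ᵐ ω ∂μ, Y ω ≤ Z ω) → R Z ≤ R Y

/-- `U(∞)`: the limit of `U` along deterministic constants `y → ∞`
(equal to the supremum, since `U` is increasing along constants). -/
noncomputable def limConst (U : (Ω → ℝ) → EReal) : EReal := ⨆ y : ℝ, U (fun _ => y)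

/-- A utility functional: increasing, normalized, `[-∞,∞)`-valued,
and satisfying `U(Y) < U(∞)` for all `Y ∈ L¹`. -/
structure IsUtility (μ : Measure Ω) (U : (Ω → ℝ) → EReal) : Prop where
  mono : MonoInc μ U
  norm : U (fun _ => (0 : ℝ)) = 0
  ne_top : ∀ Y : Ω → ℝ, Integrable Y μ → U Y ≠ ⊤
  non_sat : ∀ Y : Ω → ℝ, Integrable Y μ → U Y < limConst U

/-- A risk functional: decreasing, normalized, `(-∞,∞]`-valued. -/
structure IsRisk (μ : Measure Ω) (R : (Ω → ℝ) → EReal) : Prop where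
  mono : MonoDec μ R
  norm : R (fun _ => (0 : ℝ)) = 0
  ne_bot : ∀ Y : Ω → ℝ, Integrable Y μ → R Y ≠ ⊥

/-- Positive star-shapedness: `R(λY) ≥ λ R(Y)` for `λ > 1`. -/
def PosStarShaped (μ : Measure Ω) (R : (Ω → ℝ) → EReal) : Prop :=
  ∀ Y : Ω → ℝ, Integrable Y μ → ∀ l : ℝ, 1 < l → (l : EReal) * R Y ≤ R (scale l Y)

/-- The lower Fatou property. -/
def LowerFatou (μ : Measure Ω) (R : (Ω → ℝ) → EReal) : Prop :=
  ∀ (Yn : ℕ → Ω → ℝ) (Y Z : Ω → ℝ), (∀ n, Integrable (Yn n) μ) →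
    Integrable Y μ → Integrable Z μ →
    (∀ᵐ ω ∂μ, Tendsto (fun n => Yn n ω) atTop (nhds (Y ω))) →
    (∀ n, ∀ᵐ ω ∂μ, |Yn n ω| ≤ Z ω) →
    R Y ≤ Filter.liminf (fun n => R (Yn n)) atTop

/-- The upper Fatou property. -/
def UpperFatou (μ : Measure Ω) (U : (Ω → ℝ) → EReal) : Prop :=
  ∀ (Yn : ℕ → Ω → ℝ) (Y Z : Ω → ℝ), (∀ n, Integrable (Yn n) μ) →
    Integrable Y μ → Integrable Z μ →
    (∀ᵐ ω ∂μ, Tendsto (fun n => Yn n ω) atTop (nhds (Y ω))) →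
    (∀ n, ∀ᵐ ω ∂μ, |Yn n ω| ≤ Z ω) →
    Filter.limsup (fun n => U (Yn n)) atTop ≤ U Y

/-- Sensitivity to large losses for a risk functional. -/
def SensLLRisk (μ : Measure Ω) (R : (Ω → ℝ) → EReal) : Prop :=
  ∀ Y : Ω → ℝ, Integrable Y μ → 0 < μ {ω | Y ω < 0} →
    ∃ l₀ : ℝ, 0 < l₀ ∧ ∀ l : ℝ, l₀ < l → 0 < R (scale l Y)

/-- Sensitivity to large losses for a utility functional. -/
def SensLLUtility (μ : Measure Ω) (U : (Ω → ℝ) → EReal) : Prop :=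
  ∀ Y : Ω → ℝ, Integrable Y μ → 0 < μ {ω | Y ω < 0} →
    ∃ l₀ : ℝ, 0 < l₀ ∧ ∀ l : ℝ, l₀ < l → U (scale l Y) < 0

/-- Weak sensitivity to large losses for a utility functional. -/
def WeakSensLLUtility (μ : Measure Ω) (U : (Ω → ℝ) → EReal) : Prop :=
  ∀ Y : Ω → ℝ, Integrable Y μ → 0 < μ {ω | Y ω < 0} →
    Filter.limsup (fun l : ℝ => U (scale l Y)) atTop < limConst U

/-- Sensitivity equivalence for a utility functional. -/
def SensEquivUtility (μ : Measure Ω) (U : (Ω → ℝ) → EReal) : Prop :=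
  WeakSensLLUtility μ U ↔ SensLLUtility μ U

/-- Law-invariance of a functional on `L¹`. -/
def LawInvariant (μ : Measure Ω) (H : (Ω → ℝ) → EReal) : Prop :=
  ∀ Y Z : Ω → ℝ, Integrable Y μ → Integrable Z μ →
    ProbabilityTheory.IdentDistrib Y Z μ μ → H Y = H Z

/-- Cash-additivity: `H(Y + c) = H(Y) + H(c)` for constants `c`. -/
def CashAdditive (μ : Measure Ω) (H : (Ω → ℝ) → EReal) : Prop :=
  ∀ Y : Ω → ℝ, Integrable Y μ → ∀ c : ℝ,
    H (fun ω => Y ω + c) = H Y + H (fun _ => c)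

/-- Cash-convexity of a risk functional. -/
def CashConvex (μ : Measure Ω) (R : (Ω → ℝ) → EReal) : Prop :=
  ∀ Y : Ω → ℝ, Integrable Y μ → ∀ c l : ℝ, 0 < l → l < 1 →
    R (fun ω => l * Y ω + (1 - l) * c) ≤
      (l : EReal) * R Y + ((1 - l : ℝ) : EReal) * R (fun _ => c)

/-- Cash-concavity of a utility functional. -/
def CashConcave (μ : Measure Ω) (U : (Ω → ℝ) → EReal) : Prop :=
  ∀ Y : Ω → ℝ, Integrable Y μ → ∀ c l : ℝ, 0 < l → l < 1 →
    (l : EReal) * U Y + ((1 - l : ℝ) : EReal) * U (fun _ => c) ≤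
      U (fun ω => l * Y ω + (1 - l) * c)

/-- Strict quasi-concavity of a utility functional. -/
def StrictQuasiConcave (μ : Measure Ω) (U : (Ω → ℝ) → EReal) : Prop :=
  ∀ Y Z : Ω → ℝ, Integrable Y μ → Integrable Z μ → 0 < μ {ω | Y ω ≠ Z ω} →
    ∀ l : ℝ, 0 < l → l < 1 →
      min (U Y) (U Z) < U (fun ω => l * Y ω + (1 - l) * Z ω)

/-- Quasi-convexity of a risk functional. -/
def QuasiConvex (μ : Measure Ω) (R : (Ω → ℝ) → EReal) : Prop :=
  ∀ Y Z : Ω → ℝ, Integrable Y μ → Integrable Z μ → ∀ l : ℝ, 0 < l → l < 1 →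
    R (fun ω => l * Y ω + (1 - l) * Z ω) ≤ max (R Y) (R Z)

/-- An atomless measure. -/
def Atomless (μ : Measure Ω) : Prop :=
  ∀ s : Set Ω, MeasurableSet s → μ s ≠ 0 →
    ∃ t : Set Ω, t ⊆ s ∧ MeasurableSet t ∧ 0 < μ t ∧ μ t < μ s

/-- A market: a finite tuple of integrable payoffs, non-redundant
(linearly independent in `L¹`) and arbitrage-free. -/
structure IsMarket (μ : Measure Ω) {d : ℕ} (X : Fin d → Ω → ℝ) : Prop where
  integrable : ∀ i, Integrable (X i) μ
  nonredundant : ∀ π : Fin d → ℝ, (∀ᵐ ω ∂μ, port X π ω = 0) → π = 0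
  no_arbitrage : ¬∃ π : Fin d → ℝ,
      (∀ᵐ ω ∂μ, 0 ≤ port X π ω) ∧ 0 < μ {ω | 0 < port X π ω}

/-- `(U,R)`-portfolio selection is weakly well posed for the market `X`. -/
def WeaklyWellPosedFor (U R : (Ω → ℝ) → EReal) {d : ℕ} (X : Fin d → Ω → ℝ) : Prop :=
  ∀ Rmax : ℝ, 0 ≤ Rmax →
    (⨆ π : {π : Fin d → ℝ // R (port X π) ≤ (Rmax : EReal)}, U (port X π.1)) < limConst U

/-- `(U,R)`-portfolio selection is well posed for the market `X`:
the supremum is attained by some portfolio. -/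
def WellPosedFor (U R : (Ω → ℝ) → EReal) {d : ℕ} (X : Fin d → Ω → ℝ) : Prop :=
  ∀ Rmax : ℝ, 0 ≤ Rmax →
    ∃ πs : Fin d → ℝ, R (port X πs) ≤ (Rmax : EReal) ∧
      ∀ π : Fin d → ℝ, R (port X π) ≤ (Rmax : EReal) → U (port X π) ≤ U (port X πs)

/-- Market-independent weak well-posedness. -/
def MIWeaklyWellPosed (μ : Measure Ω) (U R : (Ω → ℝ) → EReal) : Prop :=
  ∀ (d : ℕ), 0 < d → ∀ X : Fin d → Ω → ℝ, IsMarket μ X → WeaklyWellPosedFor U R X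

/-- Market-independent well-posedness. -/
def MIWellPosed (μ : Measure Ω) (U R : (Ω → ℝ) → EReal) : Prop :=
  ∀ (d : ℕ), 0 < d → ∀ X : Fin d → Ω → ℝ, IsMarket μ X → WellPosedFor U R X

/-- The market `X` admits `(U,R)`-arbitrage. -/
def URArbitrage (U R : (Ω → ℝ) → EReal) {d : ℕ} (X : Fin d → Ω → ℝ) : Prop :=
  ∃ (π : ℕ → Fin d → ℝ) (Rt : ℝ), 0 ≤ Rt ∧
    Tendsto (fun n => U (port X (π n))) atTop (nhds (limConst U)) ∧
    ∀ n, R (port X (π n)) ≤ (Rt : EReal)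

/-- The terminal payoff `θ · S̄₁` of a portfolio `θ` in a normalized market model
with interest rate `r` and risky payoffs `S`. -/
def mmPayoff {d : ℕ} (r : ℝ) (S : Fin d → Ω → ℝ) (θ : Fin (d + 1) → ℝ) : Ω → ℝ :=
  fun ω => θ 0 * (1 + r) + ∑ i : Fin d, θ i.succ * S i ω

/-- A normalized, arbitrage-free and non-redundant market model with `d` risky assets:
all initial prices are `1`, asset `0` is riskless with payoff `1 + r`. -/
structure MarketModel (μ : Measure Ω) (d : ℕ) where
  r : ℝ
  hr : -1 < r
  S : Fin d → Ω → ℝ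
  integrable : ∀ i, Integrable (S i) μ
  nonredundant : ∀ θ : Fin (d + 1) → ℝ, (∀ᵐ ω ∂μ, mmPayoff r S θ ω = 0) → θ = 0
  no_arbitrage : ¬∃ θ : Fin (d + 1) → ℝ, (∑ j, θ j) ≤ 0 ∧
    (∀ᵐ ω ∂μ, 0 ≤ mmPayoff r S θ ω) ∧ 0 < μ {ω | 0 < mmPayoff r S θ ω}

/-- The terminal payoff `θ · S̄₁`. -/
def payoff {μ : Measure Ω} {d : ℕ} (M : MarketModel μ d) (θ : Fin (d + 1) → ℝ) : Ω → ℝ :=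
  mmPayoff M.r M.S θ

/-- The initial cost `θ · S̄₀` (all initial prices are normalized to `1`). -/
def cost {μ : Measure Ω} {d : ℕ} (_M : MarketModel μ d) (θ : Fin (d + 1) → ℝ) : ℝ :=
  ∑ j, θ j

/-- The positive part of an extended real number, as an element of `ℝ≥0∞`. -/
noncomputable def posPart (x : EReal) : ℝ≥0∞ :=
  if x = ⊤ then ⊤ else ENNReal.ofReal x.toReal

/-- The expected utility `E[u(Y)]` of a position `Y`, as an extended real number. -/
noncomputable def expEU (μ : Measure Ω) (u : ℝ → EReal) (Y : Ω → ℝ) : EReal :=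
  ((∫⁻ ω, posPart (u (Y ω)) ∂μ : ℝ≥0∞) : EReal) -
    ((∫⁻ ω, posPart (-(u (Y ω))) ∂μ : ℝ≥0∞) : EReal)

/-- A utility function: increasing, normalized, `[-∞,∞)`-valued, non-satiated
(`u(∞) > u(z)` for all `z`), and of at most linear growth at `+∞`
(`limsup_{y→∞} u(y)/y < ∞`). -/
structure IsUtilityFun (u : ℝ → EReal) : Prop where
  mono : Monotone u
  norm : u 0 = 0
  ne_top : ∀ y : ℝ, u y ≠ ⊤
  non_sat : ∀ z : ℝ, u z < ⨆ y : ℝ, u y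
  growth : ∃ a : ℝ, ∀ᶠ y in (atTop : Filter ℝ), u y ≤ ((a * y : ℝ) : EReal)

/-- `u` is unbounded (its range is not contained in any bounded interval of `ℝ`). -/
def UnboundedFun (u : ℝ → EReal) : Prop :=
  ¬∃ C : ℝ, ∀ y : ℝ, ((-C : ℝ) : EReal) ≤ u y ∧ u y ≤ ((C : ℝ) : EReal)

/-- `u` is negatively star-shaped on `ℝ₊`: `u(λy) ≤ λ u(y)` for `y ≥ 0`, `λ ≥ 1`. -/
def NegStarShapedPos (u : ℝ → EReal) : Prop :=
  ∀ y : ℝ, 0 ≤ y → ∀ l : ℝ, 1 ≤ l → u (l * y) ≤ (l : EReal) * u y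

/-- The asymptotic loss-gain ratio `ALG(u) = limsup_{y→∞} u(-y)/u(y)`. -/
noncomputable def ALG (u : ℝ → EReal) : EReal :=
  Filter.limsup (fun y : ℝ => u (-y) / u y) atTop

/-- Strict concavity of a `[-∞,∞)`-valued utility function. -/
def StrictConcaveFun (u : ℝ → EReal) : Prop :=
  ∀ y z : ℝ, y ≠ z → ∀ l : ℝ, 0 < l → l < 1 →
    (l : EReal) * u y + ((1 - l : ℝ) : EReal) * u z < u (l * y + (1 - l) * z)


/-- Auxiliary: multiplication by a nonneg real coe distributes over EReal addition. -/
lemma aux_coe_mul_add (r : ℝ) (hr : 0 ≤ r) (A B : EReal) :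
    (r : EReal) * (A + B) = (r : EReal) * A + (r : EReal) * B := by
  rcases eq_or_lt_of_le hr with h0 | hpos
  · simp [← h0]
  induction A <;> induction B <;>
    simp_all [EReal.coe_mul_bot_of_pos hpos, EReal.coe_mul_top_of_pos hpos,
      EReal.bot_add, EReal.add_bot, EReal.top_add_of_ne_bot, EReal.add_top_of_ne_bot,
      EReal.coe_ne_bot, ← EReal.coe_mul, ← EReal.coe_add, mul_add]

/-- Auxiliary: multiplication by a nonneg real coe is monotone on EReal. -/
lemma aux_smul_le_smul {r : ℝ} (hr : 0 ≤ r) {A B : EReal} (h : A ≤ B) :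
    (r : EReal) * A ≤ (r : EReal) * B :=
  mul_le_mul_of_nonneg_left h (by exact_mod_cast hr)

/-- Auxiliary: a cash-additive functional is additively homogeneous on constants. -/
lemma aux_const_nsmul {Ω : Type*} [MeasurableSpace Ω] (μ : Measure Ω)
    [IsProbabilityMeasure μ] (H : (Ω → ℝ) → EReal) (hcash : CashAdditive μ H)
    (c : ℝ) (n : ℕ) :
    H (fun _ : Ω => ((n : ℝ) + 1) * c) = (((n : ℝ) + 1 : ℝ) : EReal) * H (fun _ => c) := by
  induction n with
  | zero => simp
  | succ n ih =>
    have he : (fun _ : Ω => (((n : ℕ) + 1 : ℕ) + 1 : ℝ) * c)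
        = (fun _ : Ω => ((n : ℝ) + 1) * c + c) := by
      funext ω; push_cast; ring
    rw [he, hcash (fun _ : Ω => ((n : ℝ) + 1) * c) (integrable_const _) c, ih]
    rw [show ((((n : ℕ) + 1 : ℕ) : ℝ) + 1 : ℝ) = (((n : ℝ) + 1) + 1 : ℝ) by push_cast; ring]
    rw [EReal.coe_add (((n : ℝ) + 1)) 1,
      EReal.right_distrib_of_nonneg (by exact_mod_cast (by positivity : (0:ℝ) ≤ (n : ℝ) + 1))
        (by norm_num), EReal.coe_one, one_mul]

/-- Auxiliary: negatively star-shaped + cash-additive gives `t·H(c) ≤ H(tc)` for `t > 0`. -/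
lemma aux_key_neg {Ω : Type*} [MeasurableSpace Ω] (μ : Measure Ω)
    [IsProbabilityMeasure μ] (H : (Ω → ℝ) → EReal) (hcash : CashAdditive μ H)
    (hstar : ∀ Y : Ω → ℝ, Integrable Y μ → ∀ l : ℝ, 1 < l →
        H (scale l Y) ≤ (l : EReal) * H Y)
    (c t : ℝ) (ht : 0 < t) :
    (t : EReal) * H (fun _ => c) ≤ H (fun _ => t * c) := by
  obtain ⟨n, hn⟩ := exists_nat_gt t
  have hn1 : (0:ℝ) < (n : ℝ) + 1 := by positivity
  have hl : 1 < ((n : ℝ) + 1) / t := (one_lt_div ht).2 (by linarith)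
  have h1 := hstar (fun _ => t * c) (integrable_const _) _ hl
  have hsc : scale (((n : ℝ) + 1) / t) (fun _ : Ω => t * c)
      = (fun _ : Ω => ((n : ℝ) + 1) * c) := by
    funext ω; simp only [scale]; field_simp
  rw [hsc, aux_const_nsmul μ H hcash c n] at h1
  have h2 := aux_smul_le_smul (r := t / ((n : ℝ) + 1)) (by positivity) h1
  rw [← mul_assoc, ← mul_assoc, ← EReal.coe_mul, ← EReal.coe_mul] at h2
  rw [show t / ((n : ℝ) + 1) * ((n : ℝ) + 1) = t by field_simp] at h2
  rw [show t / ((n : ℝ) + 1) * (((n : ℝ) + 1) / t) = 1 by field_simp] at h2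
  simpa using h2

/-- Auxiliary: positively star-shaped + cash-additive gives `H(tc) ≤ t·H(c)` for `t > 0`. -/
lemma aux_key_pos {Ω : Type*} [MeasurableSpace Ω] (μ : Measure Ω)
    [IsProbabilityMeasure μ] (H : (Ω → ℝ) → EReal) (hcash : CashAdditive μ H)
    (hstar : ∀ Y : Ω → ℝ, Integrable Y μ → ∀ l : ℝ, 1 < l →
        (l : EReal) * H Y ≤ H (scale l Y))
    (c t : ℝ) (ht : 0 < t) :
    H (fun _ => t * c) ≤ (t : EReal) * H (fun _ => c) := by
  obtain ⟨n, hn⟩ := exists_nat_gt t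
  have hn1 : (0:ℝ) < (n : ℝ) + 1 := by positivity
  have hl : 1 < ((n : ℝ) + 1) / t := (one_lt_div ht).2 (by linarith)
  have h1 := hstar (fun _ => t * c) (integrable_const _) _ hl
  have hsc : scale (((n : ℝ) + 1) / t) (fun _ : Ω => t * c)
      = (fun _ : Ω => ((n : ℝ) + 1) * c) := by
    funext ω; simp only [scale]; field_simp
  rw [hsc, aux_const_nsmul μ H hcash c n] at h1
  have h2 := aux_smul_le_smul (r := t / ((n : ℝ) + 1)) (by positivity) h1
  rw [← mul_assoc, ← mul_assoc, ← EReal.coe_mul, ← EReal.coe_mul] at h2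
  rw [show t / ((n : ℝ) + 1) * ((n : ℝ) + 1) = t by field_simp] at h2
  rw [show t / ((n : ℝ) + 1) * (((n : ℝ) + 1) / t) = 1 by field_simp] at h2
  simpa using h2

/-- a cash-additive functional that is negatively (resp. positively)
star-shaped is cash-concave (resp. cash-convex). -/
theorem stmt1 {Ω : Type*} [MeasurableSpace Ω] (μ : Measure Ω) [IsProbabilityMeasure μ]
    (H : (Ω → ℝ) → EReal) (hcash : CashAdditive μ H) :
    ((∀ Y : Ω → ℝ, Integrable Y μ → ∀ l : ℝ, 1 < l →
        H (scale l Y) ≤ (l : EReal) * H Y) →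
      CashConcave μ H) ∧
    ((∀ Y : Ω → ℝ, Integrable Y μ → ∀ l : ℝ, 1 < l →
        (l : EReal) * H Y ≤ H (scale l Y)) →
      CashConvex μ H) := by
  constructor
  · intro hstar Y hY c l hl0 hl1
    set t : ℝ := (1 - l) / l with htdef
    have htpos : 0 < t := div_pos (by linarith) hl0
    have hZ : Integrable (fun ω => l * Y ω + (1 - l) * c) μ :=
      (hY.const_mul l).add (integrable_const _)
    have hil : 1 < 1 / l := (one_lt_div hl0).2 hl1
    have h1 := hstar (fun ω => l * Y ω + (1 - l) * c) hZ (1 / l) hil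
    have hsc : scale (1 / l) (fun ω => l * Y ω + (1 - l) * c)
        = (fun ω => Y ω + t * c) := by
      funext ω; simp only [scale, htdef]; field_simp
    rw [hsc, hcash Y hY (t * c)] at h1
    have h2 := aux_key_neg μ H hcash hstar c t htpos
    calc (l : EReal) * H Y + ((1 - l : ℝ) : EReal) * H (fun _ => c)
        = (l : EReal) * H Y + (l : EReal) * ((t : EReal) * H (fun _ => c)) := by
          rw [← mul_assoc, ← EReal.coe_mul,
            show l * t = 1 - l by rw [htdef]; field_simp]
      _ ≤ (l : EReal) * H Y + (l : EReal) * H (fun _ => t * c) :=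
          add_le_add_right (aux_smul_le_smul hl0.le h2) _
      _ = (l : EReal) * (H Y + H (fun _ => t * c)) :=
          (aux_coe_mul_add l hl0.le _ _).symm
      _ ≤ (l : EReal) * (((1 / l : ℝ) : EReal) * H (fun ω => l * Y ω + (1 - l) * c)) :=
          aux_smul_le_smul hl0.le h1
      _ = H (fun ω => l * Y ω + (1 - l) * c) := by
          rw [← mul_assoc, ← EReal.coe_mul, mul_one_div, div_self hl0.ne', EReal.coe_one,
            one_mul]
  · intro hstar Y hY c l hl0 hl1
    set t : ℝ := (1 - l) / l with htdef
    have htpos : 0 < t := div_pos (by linarith) hl0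
    have hZ : Integrable (fun ω => l * Y ω + (1 - l) * c) μ :=
      (hY.const_mul l).add (integrable_const _)
    have hil : 1 < 1 / l := (one_lt_div hl0).2 hl1
    have h1 := hstar (fun ω => l * Y ω + (1 - l) * c) hZ (1 / l) hil
    have hsc : scale (1 / l) (fun ω => l * Y ω + (1 - l) * c)
        = (fun ω => Y ω + t * c) := by
      funext ω; simp only [scale, htdef]; field_simp
    rw [hsc, hcash Y hY (t * c)] at h1
    have h2 := aux_key_pos μ H hcash hstar c t htpos
    calc H (fun ω => l * Y ω + (1 - l) * c)
        = (l : EReal) * (((1 / l : ℝ) : EReal) * H (fun ω => l * Y ω + (1 - l) * c)) := by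
          rw [← mul_assoc, ← EReal.coe_mul, mul_one_div, div_self hl0.ne', EReal.coe_one,
            one_mul]
      _ ≤ (l : EReal) * (H Y + H (fun _ => t * c)) :=
          aux_smul_le_smul hl0.le h1
      _ = (l : EReal) * H Y + (l : EReal) * H (fun _ => t * c) :=
          aux_coe_mul_add l hl0.le _ _
      _ ≤ (l : EReal) * H Y + (l : EReal) * ((t : EReal) * H (fun _ => c)) :=
          add_le_add_right (aux_smul_le_smul hl0.le h2) _
      _ = (l : EReal) * H Y + ((1 - l : ℝ) : EReal) * H (fun _ => c) := by
          rw [← mul_assoc, ← EReal.coe_mul,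
            show l * t = 1 - l by rw [htdef]; field_simp]

end URPaper
end

section
/- Let U be a utility functional and X = (X¹, …, X^d) a market. If a sequence of portfolios (π_n)_{n≥1} ⊂ ℝ^d satisfies lim_{n→∞} U(X_{π_n}) = U(∞), then ‖π_n‖ → ∞. -/
open MeasureTheory Filter
open scoped ENNReal

namespace URPaper

variable {Ω : Type*} [MeasurableSpace Ω]

/-- if `U(X_{π_n}) → U(∞)` along a sequence of portfolios in a market,
then `‖π_n‖ → ∞`. -/
theorem stmt2 {Ω : Type*} [MeasurableSpace Ω] (μ : Measure Ω) [IsProbabilityMeasure μ]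
    (U : (Ω → ℝ) → EReal) (hU : IsUtility μ U)
    {d : ℕ} (hd : 0 < d) (X : Fin d → Ω → ℝ) (hX : IsMarket μ X)
    (π : ℕ → Fin d → ℝ)
    (hconv : Tendsto (fun n => U (port X (π n))) atTop (nhds (limConst U))) :
    Tendsto (fun n => ‖π n‖) atTop atTop := by
  by_contra hnot
  rw [tendsto_atTop] at hnot
  push_neg at hnot
  obtain ⟨C, hC⟩ := hnot
  -- frequently ‖π n‖ < C
  set C' : ℝ := max C 0 with hC'
  have hC'0 : 0 ≤ C' := le_max_right _ _
  -- dominating integrable payoff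
  set Z : Ω → ℝ := fun ω => ∑ i, C' * |X i ω| with hZ
  have hZint : Integrable Z μ := by
    apply integrable_finset_sum
    intro i _
    exact ((hX.integrable i).abs).const_mul C'
  have hportint : ∀ n, Integrable (port X (π n)) μ := by
    intro n
    apply integrable_finset_sum
    intro i _
    exact (hX.integrable i).const_mul (π n i)
  -- U Z < limConst U
  have hUZ : U Z < limConst U := hU.non_sat Z hZint
  -- eventually U (port X (π n)) > U Z
  have hev : ∀ᶠ n in atTop, U Z < U (port X (π n)) :=
    hconv.eventually (eventually_gt_nhds hUZ)
  -- frequently U (port X (π n)) ≤ U Z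
  have hfreq : ∃ᶠ n in atTop, U (port X (π n)) ≤ U Z := by
    refine hC.mono ?_
    intro n hn
    have hnorm : ‖π n‖ ≤ C' := le_trans (le_of_lt hn) (le_max_left _ _)
    refine hU.mono _ _ (hportint n) hZint (Filter.Eventually.of_forall ?_)
    intro ω
    simp only [port, hZ]
    refine Finset.sum_le_sum ?_
    intro i _
    calc π n i * X i ω ≤ |π n i * X i ω| := le_abs_self _
      _ = |π n i| * |X i ω| := abs_mul _ _
      _ ≤ C' * |X i ω| := by
          apply mul_le_mul_of_nonneg_right _ (abs_nonneg _)
          calc |π n i| = ‖π n i‖ := (Real.norm_eq_abs _).symm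
            _ ≤ ‖π n‖ := norm_le_pi_norm (π n) i
            _ ≤ C' := hnorm
  obtain ⟨n, hn1, hn2⟩ := (hfreq.and_eventually hev).exists
  exact absurd hn1 (not_le.mpr hn2)

end URPaper
end

section
/- Let R be a risk functional that is positively star-shaped and satisfies the lower Fatou property, and let X = (X¹, …, X^d) be a market. If there exist R̃ ∈ [0, ∞) and a sequence of portfolios (π_n)_{n≥1} ⊂ ℝ^d with ‖π_n‖ → ∞ and R(X_{π_n}) ≤ R̃ for all n, then there exists a portfolio π ∈ ℝ^d \ {0} such that R(λ X_π) ≤ 0 for all λ > 0. -/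
open MeasureTheory Filter
open scoped ENNReal

namespace URPaper

variable {Ω : Type*} [MeasurableSpace Ω]

lemma port_integrable {Ω : Type*} [MeasurableSpace Ω] {μ : Measure Ω} {d : ℕ}
    {X : Fin d → Ω → ℝ} (h : ∀ i, Integrable (X i) μ) (π : Fin d → ℝ) :
    Integrable (port X π) μ := by
  unfold port
  exact integrable_finset_sum _ fun i _ => (h i).const_mul _

lemma port_smul {Ω : Type*} [MeasurableSpace Ω] {d : ℕ}
    (X : Fin d → Ω → ℝ) (a : ℝ) (π : Fin d → ℝ) :
    port X (a • π) = scale a (port X π) := by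
  funext ω
  simp [port, scale, Finset.mul_sum, mul_assoc]

/-- if `R` is positively star-shaped with the lower Fatou property and
an unbounded sequence of portfolios has risk bounded by `R̃ ≥ 0`, then some nonzero
portfolio has nonpositive risk under arbitrary scaling. -/
theorem stmt3 {Ω : Type*} [MeasurableSpace Ω] (μ : Measure Ω) [IsProbabilityMeasure μ]
    (R : (Ω → ℝ) → EReal) (hR : IsRisk μ R)
    (hps : PosStarShaped μ R) (hlf : LowerFatou μ R)
    {d : ℕ} (hd : 0 < d) (X : Fin d → Ω → ℝ) (hX : IsMarket μ X)
    (Rt : ℝ) (hRt : 0 ≤ Rt) (π : ℕ → Fin d → ℝ)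
    (hnorm : Tendsto (fun n => ‖π n‖) atTop atTop)
    (hbound : ∀ n, R (port X (π n)) ≤ (Rt : EReal)) :
    ∃ p : Fin d → ℝ, p ≠ 0 ∧ ∀ l : ℝ, 0 < l → R (scale l (port X p)) ≤ 0 := by
  -- eventually the norms are at least 1
  obtain ⟨N, hN⟩ := (hnorm.eventually_ge_atTop 1).exists_forall_of_atTop
  -- normalized portfolios on the unit sphere
  set ρ : ℕ → Fin d → ℝ := fun n => ‖π (n + N)‖⁻¹ • π (n + N) with hρdef
  have hnormpos : ∀ n, (0 : ℝ) < ‖π (n + N)‖ := fun n =>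
    lt_of_lt_of_le one_pos (hN (n + N) (Nat.le_add_left _ _))
  have hρsphere : ∀ n, ρ n ∈ Metric.sphere (0 : Fin d → ℝ) 1 := by
    intro n
    have h0 : ‖π (n + N)‖ ≠ 0 := (hnormpos n).ne'
    simp [hρdef, norm_smul, abs_of_pos (inv_pos.mpr (hnormpos n)),
      inv_mul_cancel₀ h0]
  obtain ⟨p, hpmem, φ, hφ, hconv⟩ :=
    (isCompact_sphere (0 : Fin d → ℝ) 1).tendsto_subseq hρsphere
  have hpnorm : ‖p‖ = 1 := mem_sphere_zero_iff_norm.mp hpmem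
  refine ⟨p, ?_, ?_⟩
  · intro h; rw [h] at hpnorm; simp at hpnorm
  intro l hl
  -- the subsequence norms tend to infinity
  have hφatTop : Tendsto (fun n => φ n + N) atTop atTop :=
    tendsto_atTop_mono (fun n => le_trans (hφ.id_le n) (Nat.le_add_right _ N)) tendsto_id
  have hnorm' : Tendsto (fun n => ‖π (φ n + N)‖) atTop atTop := hnorm.comp hφatTop
  -- the approximating sequence
  set Yn : ℕ → Ω → ℝ := fun n => scale l (port X (ρ (φ n))) with hYndef
  have hYint : ∀ (q : Fin d → ℝ), Integrable (port X q) μ :=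
    port_integrable hX.integrable
  have hYnint : ∀ n, Integrable (Yn n) μ := fun n => (hYint _).const_mul l
  -- dominating function
  set Z : Ω → ℝ := fun ω => l * ∑ i, |X i ω| with hZdef
  have hZint : Integrable Z μ :=
    (integrable_finset_sum _ fun i _ => (hX.integrable i).abs).const_mul l
  have hdom : ∀ n, ∀ᵐ ω ∂μ, |Yn n ω| ≤ Z ω := by
    intro n
    refine Eventually.of_forall fun ω => ?_
    have hρn : ‖ρ (φ n)‖ = 1 := mem_sphere_zero_iff_norm.mp (hρsphere (φ n))
    have h1 : |port X (ρ (φ n)) ω| ≤ ∑ i, |X i ω| := by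
      calc |∑ i, ρ (φ n) i * X i ω| ≤ ∑ i, |ρ (φ n) i * X i ω| :=
            Finset.abs_sum_le_sum_abs _ _
        _ ≤ ∑ i, |X i ω| := by
            refine Finset.sum_le_sum fun i _ => ?_
            rw [abs_mul]
            have : |ρ (φ n) i| ≤ 1 := by
              have := norm_le_pi_norm (ρ (φ n)) i
              rwa [hρn] at this
            nlinarith [abs_nonneg (X i ω)]
    calc |Yn n ω| = |l| * |port X (ρ (φ n)) ω| := by simp [hYndef, scale, abs_mul]
      _ ≤ |l| * ∑ i, |X i ω| := by
          exact mul_le_mul_of_nonneg_left h1 (abs_nonneg l)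
      _ = Z ω := by rw [abs_of_pos hl]
  -- pointwise convergence
  have hconv' : ∀ᵐ ω ∂μ, Tendsto (fun n => Yn n ω) atTop (nhds (scale l (port X p) ω)) := by
    refine Eventually.of_forall fun ω => ?_
    have hcoord : ∀ i, Tendsto (fun n => ρ (φ n) i) atTop (nhds (p i)) := fun i =>
      (tendsto_pi_nhds.mp hconv) i
    have : Tendsto (fun n => port X (ρ (φ n)) ω) atTop (nhds (port X p ω)) := by
      unfold port
      exact tendsto_finset_sum _ fun i _ => (hcoord i).mul tendsto_const_nhds
    exact this.const_mul l
  -- the risk bound along the subsequence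
  set c : ℕ → ℝ := fun n => ‖π (φ n + N)‖ / l with hcdef
  have hcatTop : Tendsto c atTop atTop := hnorm'.atTop_div_const hl
  have hkey : ∀ n, 1 < c n → R (Yn n) ≤ ((Rt / c n : ℝ) : EReal) := by
    intro n hcn
    have hc0 : (0 : ℝ) < c n := lt_trans one_pos hcn
    have hscale : scale (c n) (Yn n) = port X (π (φ n + N)) := by
      funext ω
      have h0 : ‖π (φ n + N)‖ ≠ 0 := (hnormpos (φ n)).ne'
      simp only [hYndef, scale, hρdef, port, Finset.mul_sum, hcdef]
      refine Finset.sum_congr rfl fun i _ => ?_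
      simp only [Pi.smul_apply, smul_eq_mul]
      field_simp
    have key : (c n : EReal) * R (Yn n) ≤ (Rt : EReal) := by
      calc (c n : EReal) * R (Yn n) ≤ R (scale (c n) (Yn n)) :=
            hps (Yn n) (hYnint n) (c n) hcn
        _ = R (port X (π (φ n + N))) := by rw [hscale]
        _ ≤ (Rt : EReal) := hbound _
    have hbot : R (Yn n) ≠ ⊥ := hR.ne_bot _ (hYnint n)
    have htop : R (Yn n) ≠ ⊤ := by
      intro h
      rw [h, EReal.mul_top_of_pos (by exact_mod_cast hc0)] at key
      exact (EReal.coe_lt_top Rt).not_ge key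
    set r : ℝ := (R (Yn n)).toReal with hrdef
    have hr : R (Yn n) = (r : EReal) := (EReal.coe_toReal htop hbot).symm
    rw [hr] at key ⊢
    rw [← EReal.coe_mul] at key
    have : c n * r ≤ Rt := EReal.coe_le_coe_iff.mp key
    exact EReal.coe_le_coe_iff.mpr (by rw [le_div_iff₀ hc0]; linarith [this])
  -- liminf estimate
  have hev : ∀ᶠ n in atTop, R (Yn n) ≤ ((Rt / c n : ℝ) : EReal) :=
    (hcatTop.eventually_gt_atTop 1).mono fun n h => hkey n h
  have hg0 : Tendsto (fun n => ((Rt / c n : ℝ) : EReal)) atTop (nhds (0 : EReal)) := by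
    have : Tendsto (fun n => Rt / c n) atTop (nhds 0) :=
      Tendsto.div_atTop tendsto_const_nhds hcatTop
    have := (continuous_coe_real_ereal.tendsto 0).comp this
    simpa [Function.comp_def] using this
  have hliminf : liminf (fun n => R (Yn n)) atTop ≤ 0 := by
    calc liminf (fun n => R (Yn n)) atTop
        ≤ liminf (fun n => ((Rt / c n : ℝ) : EReal)) atTop := liminf_le_liminf hev
      _ = 0 := hg0.liminf_eq
  exact le_trans
    (hlf Yn (scale l (port X p)) Z hYnint ((hYint p).const_mul l) hZint hconv' hdom)
    hliminf

end URPaper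
end

section
/- Let U be a utility functional, R a risk functional, and X = (X¹, …, X^d) a market. If there exist R̃ ∈ [0, ∞) and a sequence of portfolios (π_n)_{n≥1} ⊂ ℝ^d such that lim_{n→∞} U(X_{π_n}) = U(∞) and R(X_{π_n}) ≤ R̃ for all n, then there exist Y ∈ L¹ with ℙ[Y < 0] > 0 and a sequence of reals (λ_n)_{n≥1} with λ_n → ∞ such that lim_{n→∞} U(λ_n Y) = U(∞) and R(λ_n Y) ≤ R̃ for all n. -/
open MeasureTheory Filter
open scoped ENNReal

namespace URPaper

variable {Ω : Type*} [MeasurableSpace Ω]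

section StmtFourHelpers

variable {Ω : Type*} [MeasurableSpace Ω]

lemma integrable_port {d : ℕ} {μ : Measure Ω} {X : Fin d → Ω → ℝ}
    (hX : ∀ i, Integrable (X i) μ) (v : Fin d → ℝ) : Integrable (port X v) μ := by
  unfold port
  exact integrable_finset_sum _ fun i _ => (hX i).const_mul _

lemma port_abs_le {d : ℕ} (X : Fin d → Ω → ℝ) (v : Fin d → ℝ) (ω : Ω) :
    |port X v ω| ≤ ‖v‖ * ∑ i, |X i ω| := by
  calc |port X v ω| ≤ ∑ i, |v i * X i ω| := Finset.abs_sum_le_sum_abs _ _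
  _ = ∑ i, |v i| * |X i ω| := by simp [abs_mul]
  _ ≤ ∑ i, ‖v‖ * |X i ω| := Finset.sum_le_sum fun i _ =>
        mul_le_mul_of_nonneg_right (by simpa using norm_le_pi_norm v i) (abs_nonneg _)
  _ = ‖v‖ * ∑ i, |X i ω| := by rw [Finset.mul_sum]

lemma port_smul_s4 {d : ℕ} (X : Fin d → Ω → ℝ) (c : ℝ) (v : Fin d → ℝ) (ω : Ω) :
    port X (c • v) ω = c * port X v ω := by
  simp only [port, Pi.smul_apply, smul_eq_mul, Finset.mul_sum, mul_assoc]

lemma port_sub {d : ℕ} (X : Fin d → Ω → ℝ) (v w : Fin d → ℝ) (ω : Ω) :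
    port X (v - w) ω = port X v ω - port X w ω := by
  simp [port, sub_mul, Finset.sum_sub_distrib]

end StmtFourHelpers

/-- from a `(U,R)`-arbitrage sequence in a market one can extract a
single position `Y` with `ℙ[Y<0]>0` and scalars `λ_n → ∞` realizing the arbitrage. -/
theorem stmt4 {Ω : Type*} [MeasurableSpace Ω] (μ : Measure Ω) [IsProbabilityMeasure μ]
    (U R : (Ω → ℝ) → EReal) (hU : IsUtility μ U) (hR : IsRisk μ R)
    {d : ℕ} (hd : 0 < d) (X : Fin d → Ω → ℝ) (hX : IsMarket μ X)
    (Rt : ℝ) (hRt : 0 ≤ Rt) (π : ℕ → Fin d → ℝ)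
    (hUlim : Tendsto (fun n => U (port X (π n))) atTop (nhds (limConst U)))
    (hRb : ∀ n, R (port X (π n)) ≤ (Rt : EReal)) :
    ∃ Y : Ω → ℝ, Integrable Y μ ∧ 0 < μ {ω | Y ω < 0} ∧
      ∃ lam : ℕ → ℝ, Tendsto lam atTop atTop ∧
        Tendsto (fun n => U (scale (lam n) Y)) atTop (nhds (limConst U)) ∧
        ∀ n, R (scale (lam n) Y) ≤ (Rt : EReal) := by

  classical
  set K : Ω → ℝ := fun ω => ∑ i, |X i ω| with hKdef
  have hKint : Integrable K μ := integrable_finset_sum _ fun i _ => (hX.integrable i).abs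
  have hKnn : ∀ ω, 0 ≤ K ω := fun ω => Finset.sum_nonneg fun i _ => abs_nonneg _
  have hPint : ∀ v, Integrable (port X v) μ := integrable_port hX.integrable
  -- Step 1: the norms ‖π n‖ are unbounded
  have hunb : ∀ C : ℝ, ∃ n, C < ‖π n‖ := by
    by_contra h
    push_neg at h
    obtain ⟨C, hC⟩ := h
    have hZint : Integrable (fun ω => C * K ω) μ := hKint.const_mul C
    have hle : ∀ n, U (port X (π n)) ≤ U (fun ω => C * K ω) := fun n =>
      hU.mono _ _ (hPint _) hZint (Filter.Eventually.of_forall fun ω => by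
        calc port X (π n) ω ≤ |port X (π n) ω| := le_abs_self _
        _ ≤ ‖π n‖ * K ω := port_abs_le X _ ω
        _ ≤ C * K ω := mul_le_mul_of_nonneg_right (hC n) (hKnn ω))
    have h1 : limConst U ≤ U (fun ω => C * K ω) := le_of_tendsto' hUlim hle
    exact absurd h1 (not_le.2 (hU.non_sat _ hZint))
  -- Step 2: extract a subsequence with norms going to infinity
  have hfreq : ∀ n : ℕ, ∃ᶠ k in atTop, (n : ℝ) < ‖π k‖ := by
    intro n
    rw [Filter.frequently_atTop]
    intro m
    obtain ⟨k, hk⟩ := hunb ((n : ℝ) + ∑ j ∈ Finset.range m, ‖π j‖)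
    have hsum : (0:ℝ) ≤ ∑ j ∈ Finset.range m, ‖π j‖ :=
      Finset.sum_nonneg fun j _ => norm_nonneg _
    refine ⟨k, ?_, lt_of_le_of_lt (le_add_of_nonneg_right hsum) hk⟩
    by_contra hkm
    push_neg at hkm
    have h1 : ‖π k‖ ≤ ∑ j ∈ Finset.range m, ‖π j‖ :=
      Finset.single_le_sum (f := fun j => ‖π j‖) (fun j _ => norm_nonneg _)
        (Finset.mem_range.2 hkm)
    have h2 : (0:ℝ) ≤ (n:ℝ) := Nat.cast_nonneg n
    linarith
  obtain ⟨φ, hφmono, hφ⟩ := Filter.extraction_forall_of_frequently hfreq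
  have hφpos : ∀ n, 0 < ‖π (φ n)‖ := fun n =>
    lt_of_le_of_lt (Nat.cast_nonneg n) (hφ n)
  -- Step 3: normalized portfolios, compactness
  set ξ : ℕ → (Fin d → ℝ) := fun n => ‖π (φ n)‖⁻¹ • π (φ n) with hξdef
  have hξnorm : ∀ n, ‖ξ n‖ = 1 := by
    intro n
    rw [hξdef]
    simp only [norm_smul, norm_inv, norm_norm]
    exact inv_mul_cancel₀ (ne_of_gt (hφpos n))
  have hξmem : ∀ n, ξ n ∈ Metric.closedBall (0 : Fin d → ℝ) 1 := fun n => by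
    rw [Metric.mem_closedBall, dist_zero_right, hξnorm n]
  obtain ⟨ξs, _, ψ, hψmono, hψtend⟩ :=
    (isCompact_closedBall (0 : Fin d → ℝ) 1).tendsto_subseq hξmem
  have hξsnorm : ‖ξs‖ = 1 := by
    have h1 : Tendsto (fun n => ‖ξ (ψ n)‖) atTop (nhds ‖ξs‖) :=
      (continuous_norm.tendsto ξs).comp hψtend
    have h2 : Tendsto (fun _ : ℕ => (1:ℝ)) atTop (nhds ‖ξs‖) := by
      simpa [hξnorm] using h1
    exact tendsto_nhds_unique h2 tendsto_const_nhds
  have hξsne : ξs ≠ 0 := fun h => by simp [h] at hξsnorm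
  -- Step 4: μ {port X ξs < 0} > 0
  have hneg : 0 < μ {ω | port X ξs ω < 0} := by
    rw [pos_iff_ne_zero]
    intro h0
    have hae : ∀ᵐ ω ∂μ, 0 ≤ port X ξs ω := by
      rw [ae_iff]
      simpa [not_le] using h0
    have hpos : 0 < μ {ω | 0 < port X ξs ω} := by
      rw [pos_iff_ne_zero]
      intro hp
      have hsub : {ω | port X ξs ω ≠ 0} ⊆
          {ω | port X ξs ω < 0} ∪ {ω | 0 < port X ξs ω} := fun ω hω => by
        rcases lt_or_gt_of_ne hω with h | h
        · exact Or.inl h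
        · exact Or.inr h
      have hz : μ {ω | port X ξs ω ≠ 0} = 0 := by
        refine le_antisymm ?_ zero_le
        calc μ {ω | port X ξs ω ≠ 0} ≤
            μ ({ω | port X ξs ω < 0} ∪ {ω | 0 < port X ξs ω}) := measure_mono hsub
        _ ≤ μ {ω | port X ξs ω < 0} + μ {ω | 0 < port X ξs ω} := measure_union_le _ _
        _ = 0 := by rw [h0, hp, add_zero]
      have haez : ∀ᵐ ω ∂μ, port X ξs ω = 0 := by
        rw [ae_iff]
        simpa using hz
      exact hξsne (hX.nonredundant ξs haez)
    exact hX.no_arbitrage ⟨ξs, hae, hpos⟩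
  -- Step 5: find a positive-measure set where port X ξs is uniformly negative and K bounded
  set B : ℕ → Set Ω := fun k => {ω | port X ξs ω < -((k:ℝ)+1)⁻¹ ∧ K ω ≤ k} with hBdef
  have hcover : {ω | port X ξs ω < 0} ⊆ ⋃ k, B k := by
    intro ω hω
    have hωlt : port X ξs ω < 0 := hω
    have hω' : (0:ℝ) < -port X ξs ω := neg_pos.2 hωlt
    obtain ⟨k, hk⟩ := exists_nat_gt (max (-port X ξs ω)⁻¹ (K ω))
    have hk1 : (-port X ξs ω)⁻¹ < (k:ℝ) + 1 :=
      lt_of_le_of_lt (le_max_left _ _) (lt_of_lt_of_le hk (by linarith))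
    have hk2 : K ω ≤ (k:ℝ) := le_of_lt (lt_of_le_of_lt (le_max_right _ _) hk)
    refine Set.mem_iUnion.2 ⟨k, ?_, hk2⟩
    have := inv_strictAnti₀ (inv_pos.2 hω') hk1
    rw [inv_inv] at this
    linarith
  obtain ⟨k₀, hk₀⟩ : ∃ k, μ (B k) ≠ 0 := by
    by_contra h
    push_neg at h
    have : μ (⋃ k, B k) = 0 := measure_iUnion_null h
    exact absurd (le_trans (measure_mono hcover) this.le)
      (not_le.2 hneg)
  set ε : ℝ := ((k₀:ℝ)+1)⁻¹ with hεdef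
  have hε : 0 < ε := inv_pos.2 (by positivity)
  set δ : ℝ := ε / ((k₀:ℝ)+1) with hδdef
  have hδ : 0 < δ := div_pos hε (by positivity)
  set Y : Ω → ℝ := fun ω => port X ξs ω + δ * K ω with hYdef
  have hYint : Integrable Y μ := (hPint ξs).add (hKint.const_mul δ)
  have hYneg : 0 < μ {ω | Y ω < 0} := by
    have hsub : B k₀ ⊆ {ω | Y ω < 0} := by
      intro ω ⟨h1, h2⟩
      have h3 : δ * K ω ≤ δ * (k₀:ℝ) := mul_le_mul_of_nonneg_left h2 hδ.le
      have h4 : δ * (k₀:ℝ) < δ * ((k₀:ℝ)+1) := by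
        apply mul_lt_mul_of_pos_left _ hδ
        linarith
      have h5 : δ * ((k₀:ℝ)+1) = ε := by
        rw [hδdef]
        field_simp
      have : Y ω < -ε + ε := by
        simp only [hYdef]
        have := lt_of_le_of_lt h3 h4
        rw [h5] at this
        linarith [h1]
      simpa using this
    exact lt_of_lt_of_le (pos_iff_ne_zero.2 hk₀) (measure_mono hsub)
  -- Step 6: tail of the subsequence where ‖ξ (ψ n) - ξs‖ ≤ δ
  obtain ⟨N, hN⟩ := (Metric.tendsto_atTop.1 hψtend) δ hδ
  set σ : ℕ → ℕ := fun n => ψ (n + N) with hσdef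
  set lam : ℕ → ℝ := fun n => ‖π (φ (σ n))‖ with hlamdef
  have hσmono : StrictMono σ := hψmono.comp fun a b h => by omega
  have hlamn : ∀ n : ℕ, (n:ℝ) ≤ lam n := by
    intro n
    have h1 : n ≤ σ n := le_trans (by omega : n ≤ n + N) (hψmono.le_apply)
    calc (n:ℝ) ≤ (σ n : ℝ) := Nat.cast_le.2 h1
    _ ≤ ‖π (φ (σ n))‖ := (hφ (σ n)).le
  have hlampos : ∀ n, 0 < lam n := fun n => hφpos (σ n)
  have hlamtend : Tendsto lam atTop atTop :=
    tendsto_atTop_mono hlamn tendsto_natCast_atTop_atTop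
  -- the key pointwise bound
  have hkey : ∀ n ω, port X (π (φ (σ n))) ω ≤ lam n * Y ω := by
    intro n ω
    have hdist : ‖ξ (σ n) - ξs‖ ≤ δ := by
      have := hN (n + N) (by omega)
      rw [dist_eq_norm] at this
      exact this.le
    have h1 : port X (ξ (σ n)) ω ≤ Y ω := by
      have h2 : port X (ξ (σ n)) ω - port X ξs ω = port X (ξ (σ n) - ξs) ω :=
        (port_sub X _ _ ω).symm
      have h3 : port X (ξ (σ n) - ξs) ω ≤ ‖ξ (σ n) - ξs‖ * K ω :=
        le_trans (le_abs_self _) (port_abs_le X _ ω)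
      have h4 : ‖ξ (σ n) - ξs‖ * K ω ≤ δ * K ω :=
        mul_le_mul_of_nonneg_right hdist (hKnn ω)
      simp only [hYdef]
      linarith [h2 ▸ h3]
    have h5 : port X (π (φ (σ n))) ω = lam n * port X (ξ (σ n)) ω := by
      have h6 : (lam n) • ξ (σ n) = π (φ (σ n)) := by
        rw [hlamdef, hξdef]
        simp only
        rw [smul_smul, mul_inv_cancel₀ (ne_of_gt (hφpos (σ n))), one_smul]
      rw [← h6, port_smul_s4]
    rw [h5]
    exact mul_le_mul_of_nonneg_left h1 (hlampos n).le
  have hscaleint : ∀ n, Integrable (scale (lam n) Y) μ := fun n => hYint.const_mul _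
  refine ⟨Y, hYint, hYneg, lam, hlamtend, ?_, ?_⟩
  · -- U convergence by squeeze
    have htendg : Tendsto (fun n => U (port X (π (φ (σ n))))) atTop (nhds (limConst U)) :=
      hUlim.comp ((hφmono.comp hσmono).tendsto_atTop)
    have hle1 : ∀ n, U (port X (π (φ (σ n)))) ≤ U (scale (lam n) Y) := fun n =>
      hU.mono _ _ (hPint _) (hscaleint n)
        (Filter.Eventually.of_forall fun ω => hkey n ω)
    have hle2 : ∀ n, U (scale (lam n) Y) ≤ limConst U := fun n =>
      (hU.non_sat _ (hscaleint n)).le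
    exact tendsto_of_tendsto_of_tendsto_of_le_of_le htendg tendsto_const_nhds hle1 hle2
  · -- R bound
    intro n
    have h1 : R (scale (lam n) Y) ≤ R (port X (π (φ (σ n)))) :=
      hR.mono _ _ (hPint _) (hscaleint n)
        (Filter.Eventually.of_forall fun ω => hkey n ω)
    exact le_trans h1 (hRb _)


end URPaper
end
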